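/- If a linear map Φ on M_d(ℂ) is d-positive, then it is completely positive (n-positive for all n ≥ 1). -/

import Mathlib

/-!
Applying `d`-positivity to the positive rank-one matrix `(vec 1)(vec 1)*`, where
`vec 1 = ∑ₛ eₛ ⊗ eₛ`, shows that the Choi matrix `C_Φ = ∑ₛₜ Eₛₜ ⊗ Φ(Eₛₜ)` is positive
semidefinite. A positive semidefinite `M` on `ℂⁿ ⊗ ℂᵈ` is a sum of rank-one matrices `x x*`, and,
reshaping `x` into an `n × d` matrix `X`, `(id ⊗ Φ)(x x*) = (X ⊗ 1) C_Φ (X ⊗ 1)*` is a congruence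
of the Choi matrix.
-/

open Matrix ComplexOrder

/-- The ampliation id_k ⊗ Φ of a map Φ on M_d(ℂ). -/
noncomputable def ampliation {d : ℕ} (k : ℕ)
    (Φ : Matrix (Fin d) (Fin d) ℂ → Matrix (Fin d) (Fin d) ℂ)
    (M : Matrix (Fin k × Fin d) (Fin k × Fin d) ℂ) :
    Matrix (Fin k × Fin d) (Fin k × Fin d) ℂ :=
  Matrix.of fun p q => Φ (Matrix.of fun a b => M (p.1, a) (q.1, b)) p.2 q.2

def choiMatrix {R m n : Type*} [Zero R] [One R] [DecidableEq m]
    (Φ : Matrix m m R → Matrix n n R) : Matrix (m × n) (m × n) R :=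
  of fun p q => Φ (single p.1 q.1 1) p.2 q.2

section Ampliation

variable {k d : ℕ}

theorem ampliation_vecMulVec_vec_one (Φ : Matrix (Fin d) (Fin d) ℂ → Matrix (Fin d) (Fin d) ℂ) :
    ampliation d Φ (vecMulVec (vec 1) (star (vec 1))) = choiMatrix Φ := by
  ext ⟨s, a⟩ ⟨t, b⟩
  simp only [ampliation, choiMatrix, of_apply]
  congr 2
  ext i j
  simp [vecMulVec_apply, one_apply, ← ite_and, and_comm, eq_comm]

theorem ampliation_sum (Φ : Matrix (Fin d) (Fin d) ℂ →ₗ[ℂ] Matrix (Fin d) (Fin d) ℂ)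
    {ι : Type*} (s : Finset ι) (M : ι → Matrix (Fin k × Fin d) (Fin k × Fin d) ℂ) :
    ampliation k Φ (∑ i ∈ s, M i) = ∑ i ∈ s, ampliation k Φ (M i) := by
  ext p q
  simp only [ampliation, of_apply, Matrix.sum_apply]
  rw [← Matrix.sum_apply, ← map_sum]
  exact congrArg (fun A => Φ A p.2 q.2) (by ext; simp [Matrix.sum_apply])

theorem ampliation_vecMulVec (Φ : Matrix (Fin d) (Fin d) ℂ →ₗ[ℂ] Matrix (Fin d) (Fin d) ℂ)
    (x : Fin k × Fin d → ℂ) :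
    ampliation k Φ (vecMulVec x (star x)) =
      kronecker (of (Function.curry x)) (1 : Matrix (Fin d) (Fin d) ℂ) * choiMatrix Φ *
        (kronecker (of (Function.curry x)) (1 : Matrix (Fin d) (Fin d) ℂ))ᴴ := by
  ext ⟨i, a⟩ ⟨j, b⟩
  have hblock : (of fun s t => vecMulVec x (star x) (i, s) (j, t)) =
      ∑ s, ∑ t, (x (i, s) * star (x (j, t))) • single s t (1 : ℂ) := by
    conv_lhs => rw [matrix_eq_sum_single (of _)]
    simp [vecMulVec_apply, smul_single]
  simp only [ampliation, of_apply, hblock, map_sum, map_smul, Matrix.sum_apply,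
    Matrix.smul_apply, smul_eq_mul]
  simp [mul_apply, Fintype.sum_prod_type, one_apply, choiMatrix, mul_assoc,
    apply_ite (starRingEnd ℂ), ite_mul, mul_ite, Finset.sum_ite_eq]
  rw [Finset.sum_comm]
  simp only [Finset.sum_mul]
  refine Finset.sum_congr rfl fun t _ => Finset.sum_congr rfl fun s _ => ?_
  ring

theorem posSemidef_ampliation_of_posSemidef_choiMatrix
    (Φ : Matrix (Fin d) (Fin d) ℂ →ₗ[ℂ] Matrix (Fin d) (Fin d) ℂ)
    (hΦ : (choiMatrix Φ).PosSemidef) {M : Matrix (Fin k × Fin d) (Fin k × Fin d) ℂ}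
    (hM : M.PosSemidef) : (ampliation k Φ M).PosSemidef := by
  obtain ⟨m, v, rfl⟩ := posSemidef_iff_eq_sum_vecMulVec.mp hM
  rw [ampliation_sum]
  refine posSemidef_sum _ fun r _ => ?_
  rw [ampliation_vecMulVec]
  exact hΦ.mul_mul_conjTranspose_same _

end Ampliation

/-- If a linear map on M_d(ℂ) is d-positive, then it is completely positive. -/
theorem d_positive_implies_completely_positive (d : ℕ)
    (Φ : Matrix (Fin d) (Fin d) ℂ →ₗ[ℂ] Matrix (Fin d) (Fin d) ℂ)
    (hd : ∀ M : Matrix (Fin d × Fin d) (Fin d × Fin d) ℂ,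
      M.PosSemidef → (ampliation d (⇑Φ) M).PosSemidef) :
    ∀ n, 1 ≤ n → ∀ M : Matrix (Fin n × Fin d) (Fin n × Fin d) ℂ,
      M.PosSemidef → (ampliation n (⇑Φ) M).PosSemidef := by
  intro n _ M hM
  have hChoi : (choiMatrix Φ).PosSemidef := by
    rw [← ampliation_vecMulVec_vec_one]
    exact hd _ (posSemidef_vecMulVec_self_star _)
  exact posSemidef_ampliation_of_posSemidef_choiMatrix Φ hChoi hM
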